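/- arXiv:2508.09146 — 3 statements merged into one kernel-verified Lean document; each statement's English description precedes it below -/
import Mathlib

section
/- Let N ≥ 2 be a natural number and let T_P, T_σ, T_c, T_s be positive reals with T_c ≥ 2·T_σ and T_s ≥ T_c. Define the throughput U(τ) = N·τ·(1−τ)^(N−1)·T_P / ((1−τ)^N·T_σ + N·τ·(1−τ)^(N−1)·(T_s − T_c) + (1 − (1−τ)^N)·T_c) for τ ∈ (0,1). If τ* ∈ (0,1) satisfies U(τ*) ≥ U(τ) for all τ ∈ (0,1), then τ* < 1/N. -/
set_option maxHeartbeats 1000000 in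
/-- The throughput-maximizing transmission probability is below `1/N`. -/
theorem stmt_0 (N : ℕ) (hN : 2 ≤ N)
    (TP Tσ Tc Ts : ℝ) (hTP : 0 < TP) (hTσ : 0 < Tσ) (hTc : 0 < Tc) (hTs : 0 < Ts)
    (hTc2 : 2 * Tσ ≤ Tc) (hTsTc : Tc ≤ Ts)
    (U : ℝ → ℝ)
    (hU : ∀ τ, U τ =
      (N : ℝ) * τ * (1 - τ) ^ (N - 1) * TP /
        ((1 - τ) ^ N * Tσ + (N : ℝ) * τ * (1 - τ) ^ (N - 1) * (Ts - Tc)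
          + (1 - (1 - τ) ^ N) * Tc))
    (τs : ℝ) (hτs : τs ∈ Set.Ioo (0 : ℝ) 1)
    (hmax : ∀ τ ∈ Set.Ioo (0 : ℝ) 1, U τ ≤ U τs) :
    τs < 1 / (N : ℝ) := by
  obtain ⟨hτs0, hτs1⟩ := hτs
  by_contra hcon
  push_neg at hcon
  have hN2 : (2:ℝ) ≤ (N:ℝ) := by exact_mod_cast hN
  have hNpos : (0:ℝ) < (N:ℝ) := by linarith
  have hB : 0 < Tc - Tσ := by linarith
  have hc0 : (0:ℝ) < ((N:ℝ)-1)/N := div_pos (by linarith) hNpos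
  obtain ⟨c, hc_def⟩ : ∃ c : ℝ, c = (((N:ℝ)-1)/N)^N := ⟨_, rfl⟩
  have hc : 0 < c := hc_def ▸ pow_pos hc0 N
  obtain ⟨ε, hε, hεle, hεε0⟩ :
      ∃ ε : ℝ, 0 < ε ∧ ε ≤ 1/(2*(N:ℝ)) ∧ ε ≤ (Tc - Tσ) * c / (2 * N * Tc) := by
    refine ⟨min ((Tc - Tσ) * c / (2 * N * Tc)) (1/(2*(N:ℝ))), ?_, min_le_right _ _,
      min_le_left _ _⟩
    apply lt_min
    · exact div_pos (mul_pos hB hc) (by positivity)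
    · positivity
  obtain ⟨a, ha_def⟩ : ∃ a : ℝ, a = 1/(N:ℝ) - ε := ⟨_, rfl⟩
  have hhalf : 1/(N:ℝ) - 1/(2*(N:ℝ)) = 1/(2*(N:ℝ)) := by field_simp; ring
  have hhalfpos : (0:ℝ) < 1/(2*(N:ℝ)) := by positivity
  have ha0 : 0 < a := by rw [ha_def]; linarith
  have halt : a < 1/(N:ℝ) := by rw [ha_def]; linarith
  have haτ : a < τs := lt_of_lt_of_le halt hcon
  have ha1 : a < 1 := lt_trans haτ hτs1
  set F : ℝ → ℝ := fun τ => (Tc - (Tc - Tσ)*(1-τ)^N) / ((N:ℝ)*τ*(1-τ)^(N-1)) with hF_def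
  have hden : ∀ τ ∈ Set.Ioo (0:ℝ) 1, 0 < (N:ℝ)*τ*(1-τ)^(N-1) := by
    rintro τ ⟨h1, h2⟩
    have : 0 < 1 - τ := by linarith
    positivity
  have hnum : ∀ τ ∈ Set.Ioo (0:ℝ) 1, 0 < Tc - (Tc - Tσ)*(1-τ)^N := by
    rintro τ ⟨h1, h2⟩
    have hx0 : (0:ℝ) ≤ 1 - τ := by linarith
    have hx1 : (1:ℝ) - τ ≤ 1 := by linarith
    have hp : (1-τ)^N ≤ 1 := pow_le_one₀ hx0 hx1
    nlinarith
  have hFpos : ∀ τ ∈ Set.Ioo (0:ℝ) 1, 0 < F τ := fun τ hτ =>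
    div_pos (hnum τ hτ) (hden τ hτ)
  have hUF : ∀ τ ∈ Set.Ioo (0:ℝ) 1, U τ = TP / (Ts - Tc + F τ) := by
    intro τ hτ
    have hS := hden τ hτ
    have hn := hnum τ hτ
    have hD_eq : (1-τ)^N*Tσ + (N:ℝ)*τ*(1-τ)^(N-1)*(Ts-Tc) + (1-(1-τ)^N)*Tc
        = ((N:ℝ)*τ*(1-τ)^(N-1))*(Ts-Tc) + (Tc - (Tc - Tσ)*(1-τ)^N) := by ring
    have hsplit : Ts - Tc + (Tc - (Tc - Tσ)*(1-τ)^N) / ((N:ℝ)*τ*(1-τ)^(N-1))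
        = (((N:ℝ)*τ*(1-τ)^(N-1))*(Ts-Tc) + (Tc - (Tc - Tσ)*(1-τ)^N))
            / ((N:ℝ)*τ*(1-τ)^(N-1)) := by
      rw [eq_div_iff hS.ne', add_mul, div_mul_cancel₀ _ hS.ne']; ring
    rw [hU, hD_eq, hF_def]
    simp only
    rw [hsplit, div_div_eq_mul_div]
    ring
  have hD : ∀ τ ∈ Set.Ioo a τs, 0 < deriv F τ := by
    rintro τ ⟨h1, h2⟩
    have hτ0 : 0 < τ := lt_trans ha0 h1
    have hτ1 : τ < 1 := lt_trans h2 hτs1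
    have hx0 : 0 < 1 - τ := by linarith
    have hSne : ((N:ℝ)*τ*(1-τ)^(N-1)) ≠ 0 := (hden τ ⟨hτ0, hτ1⟩).ne'
    have hx1 : HasDerivAt (fun τ:ℝ => 1 - τ) (-1) τ := by
      simpa using (hasDerivAt_id τ).const_sub 1
    have hnum' : HasDerivAt (fun τ:ℝ => Tc - (Tc - Tσ)*(1-τ)^N)
        (-((Tc - Tσ) * ((N:ℝ)*(1-τ)^(N-1)*(-1)))) τ :=
      ((hx1.pow N).const_mul (Tc - Tσ)).const_sub Tc
    have hden' : HasDerivAt (fun τ:ℝ => (N:ℝ)*τ*(1-τ)^(N-1))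
        ((N:ℝ)*1*(1-τ)^(N-1) + ((N:ℝ)*τ)*(((N-1:ℕ):ℝ)*(1-τ)^(N-1-1)*(-1))) τ :=
      ((hasDerivAt_id τ).const_mul (N:ℝ)).mul (hx1.pow (N-1))
    have hFd : HasDerivAt F
        (((-((Tc - Tσ) * ((N:ℝ)*(1-τ)^(N-1)*(-1)))) * ((N:ℝ)*τ*(1-τ)^(N-1))
          - (Tc - (Tc - Tσ)*(1-τ)^N) *
            ((N:ℝ)*1*(1-τ)^(N-1) + ((N:ℝ)*τ)*(((N-1:ℕ):ℝ)*(1-τ)^(N-1-1)*(-1))))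
          / ((N:ℝ)*τ*(1-τ)^(N-1))^2) τ := hnum'.div hden' hSne
    rw [hFd.deriv]
    have hφ : Tc*((N:ℝ)*(1-τ) - ((N:ℝ)-1)) < (Tc - Tσ)*(1-τ)^N := by
      rcases le_or_gt (1-τ) (((N:ℝ)-1)/N) with h | h
      · have hle : (N:ℝ)*(1-τ) - ((N:ℝ)-1) ≤ 0 := by
          rw [le_div_iff₀ hNpos] at h; nlinarith
        nlinarith [pow_pos hx0 N]
      · have hxc : c ≤ (1-τ)^N := by
          rw [hc_def]; exact pow_le_pow_left₀ hc0.le h.le N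
        have hxub : 1 - τ < ((N:ℝ)-1)/N + ε := by
          have he : 1 - 1/(N:ℝ) = ((N:ℝ)-1)/N := by field_simp
          rw [ha_def] at h1
          linarith
        have hTcN : Tc*((N:ℝ)*(1-τ) - ((N:ℝ)-1)) < Tc * (N:ℝ) * ε := by
          have h3 : (N:ℝ)*(1-τ) - ((N:ℝ)-1) < (N:ℝ)*ε := by
            have he : (N:ℝ) * (((N:ℝ)-1)/N) = (N:ℝ)-1 := by field_simp
            nlinarith [mul_lt_mul_of_pos_left hxub hNpos]
          nlinarith [mul_lt_mul_of_pos_left h3 hTc]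
        have h4 : Tc * (N:ℝ) * ε ≤ Tc * (N:ℝ) * ((Tc - Tσ) * c / (2 * N * Tc)) :=
          mul_le_mul_of_nonneg_left hεε0 (mul_pos hTc hNpos).le
        have he0 : Tc * (N:ℝ) * ((Tc - Tσ) * c / (2 * N * Tc)) = (Tc - Tσ)*c/2 := by
          field_simp
        have h5 : (Tc - Tσ)*c ≤ (Tc - Tσ)*(1-τ)^N :=
          mul_le_mul_of_nonneg_left hxc hB.le
        have h6 : 0 < (Tc - Tσ)*c := mul_pos hB hc
        linarith
    have key : ((-((Tc - Tσ) * ((N:ℝ)*(1-τ)^(N-1)*(-1)))) * ((N:ℝ)*τ*(1-τ)^(N-1))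
          - (Tc - (Tc - Tσ)*(1-τ)^N) *
            ((N:ℝ)*1*(1-τ)^(N-1) + ((N:ℝ)*τ)*(((N-1:ℕ):ℝ)*(1-τ)^(N-1-1)*(-1))))
        = (N:ℝ) * (1-τ)^(N-2) * ((Tc - Tσ)*(1-τ)^N - Tc*((N:ℝ)*(1-τ) - ((N:ℝ)-1))) := by
      obtain ⟨k, rfl⟩ : ∃ k, N = k + 2 := ⟨N - 2, by omega⟩
      have e2 : k + 2 - 1 - 1 = k := by omega
      have e1 : k + 2 - 1 = k + 1 := by omega
      have e3 : k + 2 - 2 = k := by omega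
      rw [e2, e1, e3]
      push_cast
      ring
    rw [key]
    have hpos : 0 < (N:ℝ) * (1-τ)^(N-2) *
        ((Tc - Tσ)*(1-τ)^N - Tc*((N:ℝ)*(1-τ) - ((N:ℝ)-1))) := by
      apply mul_pos (mul_pos hNpos (pow_pos hx0 _))
      linarith
    exact div_pos hpos (by positivity)
  have hcont : ContinuousOn F (Set.Icc a τs) := by
    rw [hF_def]
    apply ContinuousOn.div
    · fun_prop
    · fun_prop
    · intro τ hτ
      exact (hden τ ⟨lt_of_lt_of_le ha0 hτ.1, lt_of_le_of_lt hτ.2 hτs1⟩).ne'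
  have hmono : StrictMonoOn F (Set.Icc a τs) :=
    strictMonoOn_of_deriv_pos (convex_Icc a τs) hcont
      (by rw [interior_Icc]; exact hD)
  have hlt : F a < F τs :=
    hmono ⟨le_refl a, haτ.le⟩ ⟨haτ.le, le_refl τs⟩ haτ
  have haIoo : a ∈ Set.Ioo (0:ℝ) 1 := ⟨ha0, ha1⟩
  have hUa := hUF a haIoo
  have hUs := hUF τs ⟨hτs0, hτs1⟩
  have hFa := hFpos a haIoo
  have hlast : U τs < U a := by
    rw [hUa, hUs]
    exact div_lt_div_of_pos_left hTP (by linarith) (by linarith)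
  have := hmax a haIoo
  linarith
end

section
/- Let (Ω, μ) be a probability space, let X, Y : Ω → ℝ be almost-everywhere measurable functions with |X(ω) − Y(ω)| ≤ W̄ for μ-almost every ω (W̄ ≥ 0), and let f : ℝ → ℝ be Lipschitz with constant L ≥ 0. Then ∫ |f(X(ω)) − f(Y(ω))| dμ(ω) ≤ L·W̄·Real.sqrt(μ({ω : X ω ≠ Y ω}).toReal). -/
open MeasureTheory

/-- Throughput-loss bound under erroneous prompts: Lipschitz map, a.e. bounded
deviation, and the misprediction probability. -/
theorem stmt_12 {Ω : Type*} [MeasurableSpace Ω] (μ : Measure Ω) [IsProbabilityMeasure μ]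
    (X Y : Ω → ℝ) (hX : AEMeasurable X μ) (hY : AEMeasurable Y μ)
    (Wbar : ℝ) (hWbar : 0 ≤ Wbar)
    (hbound : ∀ᵐ ω ∂μ, |X ω - Y ω| ≤ Wbar)
    (f : ℝ → ℝ) (L : ℝ) (hL : 0 ≤ L)
    (hf : ∀ x y : ℝ, |f x - f y| ≤ L * |x - y|) :
    ∫ ω, |f (X ω) - f (Y ω)| ∂μ
      ≤ L * Wbar * Real.sqrt ((μ {ω | X ω ≠ Y ω}).toReal) := by
  set A : Set Ω := {ω | X ω ≠ Y ω} with hA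
  have hfc : Continuous f := by
    have : LipschitzWith ⟨L, hL⟩ f := by
      apply LipschitzWith.of_dist_le_mul
      intro x y
      rw [Real.dist_eq, Real.dist_eq]; exact hf x y
    exact this.continuous
  have hmeas : AEStronglyMeasurable (fun ω => |f (X ω) - f (Y ω)|) μ :=
    ((measurable_abs.comp_aemeasurable ((hfc.measurable.comp_aemeasurable hX).sub (hfc.measurable.comp_aemeasurable hY)))).aestronglyMeasurable
  have hnn : 0 ≤ᵐ[μ] fun ω => |f (X ω) - f (Y ω)| :=
    Filter.Eventually.of_forall fun ω => abs_nonneg _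
  rw [integral_eq_lintegral_of_nonneg_ae hnn hmeas]
  -- bound lintegral by (L*Wbar) * μ A
  have hptwise : ∀ᵐ ω ∂μ, ENNReal.ofReal (|f (X ω) - f (Y ω)|)
      ≤ A.indicator (fun _ => ENNReal.ofReal (L * Wbar)) ω := by
    filter_upwards [hbound] with ω hω
    by_cases h : X ω = Y ω
    · have : |f (X ω) - f (Y ω)| = 0 := by rw [h]; simp
      simp [this]
    · have hωA : ω ∈ A := h
      rw [Set.indicator_of_mem hωA]
      apply ENNReal.ofReal_le_ofReal
      calc |f (X ω) - f (Y ω)| ≤ L * |X ω - Y ω| := hf _ _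
        _ ≤ L * Wbar := by nlinarith [abs_nonneg (X ω - Y ω)]
  have hlin : ∫⁻ ω, ENNReal.ofReal (|f (X ω) - f (Y ω)|) ∂μ
      ≤ ENNReal.ofReal (L * Wbar) * μ A :=
    le_trans (lintegral_mono_ae hptwise) (lintegral_indicator_const_le A _)
  have hμA1 : μ A ≤ 1 := (measure_mono (Set.subset_univ A)).trans_eq (measure_univ)
  have hμAne : μ A ≠ ⊤ := (hμA1.trans_lt ENNReal.one_lt_top).ne
  have h1 : (∫⁻ ω, ENNReal.ofReal (|f (X ω) - f (Y ω)|) ∂μ).toReal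
      ≤ L * Wbar * (μ A).toReal := by
    have := ENNReal.toReal_mono (by finiteness) hlin
    rwa [ENNReal.toReal_mul, ENNReal.toReal_ofReal (by positivity)] at this
  refine h1.trans ?_
  have hle1 : (μ A).toReal ≤ 1 := by
    have := ENNReal.toReal_mono ENNReal.one_ne_top hμA1
    simpa using this
  have hsq : (μ A).toReal ≤ Real.sqrt ((μ A).toReal) := by
    nlinarith [Real.sq_sqrt (ENNReal.toReal_nonneg (a := μ A)),
      Real.sqrt_nonneg ((μ A).toReal), ENNReal.toReal_nonneg (a := μ A)]
  nlinarith [Real.sqrt_nonneg ((μ A).toReal), mul_nonneg hL hWbar]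
end

section
/- Let N ≥ 2 be a natural number and let T_P, T_σ, T_c, T_s be reals with 0 < T_σ ≤ T_c ≤ T_s and T_P > 0. Define the throughput U(τ) = N·τ·(1−τ)^(N−1)·T_P / ((1−τ)^N·T_σ + N·τ·(1−τ)^(N−1)·(T_s − T_c) + (1 − (1−τ)^N)·T_c). Then for all τ₁, τ₂ ∈ [0,1], |U(τ₁) − U(τ₂)| ≤ (N·T_P/T_σ)·|τ₁ − τ₂|. -/
/-- Key polynomial inequality: for `s ∈ [0,1]`,
`s^M * ((M+2)(1-s) - 1 + s^(M+2)) ≤ (1 - s^(M+2))^2`. -/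
private lemma bianchi_key_ineq (M : ℕ) {s : ℝ} (h0 : 0 ≤ s) (h1 : s ≤ 1) :
    s ^ M * (((M : ℝ) + 2) * (1 - s) - 1 + s ^ (M + 2)) ≤ (1 - s ^ (M + 2)) ^ 2 := by
  induction M with
  | zero =>
    push_cast
    nlinarith [sq_nonneg (1 - s), sq_nonneg s, mul_nonneg h0 (sub_nonneg.2 h1)]
  | succ M ih =>
    have hb0 : (0:ℝ) ≤ s ^ M := pow_nonneg h0 M
    have hb1 : s ^ M ≤ 1 := pow_le_one₀ h0 h1
    have hx0 : (0:ℝ) ≤ s ^ (M + 2) := pow_nonneg h0 _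
    have hx1 : s ^ (M + 2) ≤ 1 := pow_le_one₀ h0 h1
    have h1s : (0:ℝ) ≤ 1 - s := by linarith
    have h1x : (0:ℝ) ≤ 1 - s ^ (M + 2) := by linarith
    have e1 : s ^ (M + 1) = s * s ^ M := by rw [pow_succ]; ring
    have e3 : s ^ (M + 1 + 2) = s * s ^ (M + 2) := by
      rw [show M + 1 + 2 = (M + 2) + 1 from rfl, pow_succ]; ring
    push_cast
    rw [e1, e3]
    set b := s ^ M with hbdef
    set x := s ^ (M + 2) with hxdef
    have step2 : s * (b * (((M:ℝ) + 2) * (1 - s) - 1 + x)) ≤ s * (1 - x) ^ 2 := by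
      apply mul_le_mul_of_nonneg_left _ h0
      have := ih
      push_cast at this
      exact this
    have step3 : s * b * ((1 - s) * (1 - x)) ≤ s * ((1 - s) * (1 - x)) := by
      have hsb : s * b ≤ s := by nlinarith
      exact mul_le_mul_of_nonneg_right hsb (mul_nonneg h1s h1x)
    have step4 : s * (1 - x) ^ 2 + s * ((1 - s) * (1 - x)) ≤ (1 - s * x) ^ 2 := by
      nlinarith [mul_nonneg (mul_nonneg (mul_nonneg h0 h1s) hx0) h1x, sq_nonneg (1 - s)]
    nlinarith [step2, step3, step4]

set_option maxHeartbeats 1000000 in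
/-- The Bianchi throughput is `(N·T_P/T_σ)`-Lipschitz in `τ` on `[0,1]`. -/
theorem stmt_18 (N : ℕ) (hN : 2 ≤ N)
    (TP Tσ Tc Ts : ℝ) (hTσ : 0 < Tσ) (hTσTc : Tσ ≤ Tc) (hTcTs : Tc ≤ Ts) (hTP : 0 < TP)
    (U : ℝ → ℝ)
    (hU : ∀ τ, U τ =
      (N : ℝ) * τ * (1 - τ) ^ (N - 1) * TP /
        ((1 - τ) ^ N * Tσ + (N : ℝ) * τ * (1 - τ) ^ (N - 1) * (Ts - Tc)
          + (1 - (1 - τ) ^ N) * Tc)) :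
    ∀ τ₁ ∈ Set.Icc (0 : ℝ) 1, ∀ τ₂ ∈ Set.Icc (0 : ℝ) 1,
      |U τ₁ - U τ₂| ≤ ((N : ℝ) * TP / Tσ) * |τ₁ - τ₂| := by
  obtain ⟨M, rfl⟩ : ∃ M, N = M + 2 := ⟨N - 2, by omega⟩
  simp only [show M + 2 - 1 = M + 1 from rfl] at hU
  have hTc0 : (0:ℝ) < Tc := lt_of_lt_of_le hTσ hTσTc
  set num : ℝ → ℝ := fun τ => ((M + 2 : ℕ) : ℝ) * τ * (1 - τ) ^ (M + 1) * TP with hnum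
  set den : ℝ → ℝ := fun τ =>
      (1 - τ) ^ (M + 2) * Tσ + ((M + 2 : ℕ) : ℝ) * τ * (1 - τ) ^ (M + 1) * (Ts - Tc)
        + (1 - (1 - τ) ^ (M + 2)) * Tc with hden
  set num' : ℝ → ℝ := fun τ =>
      (((M + 2 : ℕ) : ℝ) * (1 - τ) ^ (M + 1)
        + ((M + 2 : ℕ) : ℝ) * τ * (((M + 1 : ℕ) : ℝ) * (1 - τ) ^ M * (-1))) * TP with hnum'
  set den' : ℝ → ℝ := fun τ =>
      ((M + 2 : ℕ) : ℝ) * (1 - τ) ^ (M + 1) * (-1) * Tσ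
        + (((M + 2 : ℕ) : ℝ) * (1 - τ) ^ (M + 1)
            + ((M + 2 : ℕ) : ℝ) * τ * (((M + 1 : ℕ) : ℝ) * (1 - τ) ^ M * (-1))) * (Ts - Tc)
        + (-(((M + 2 : ℕ) : ℝ) * (1 - τ) ^ (M + 1) * (-1))) * Tc with hden'
  -- lower bound for the denominator
  have hdlb : ∀ x ∈ Set.Icc (0:ℝ) 1,
      Tc * (1 - (1-x)^M * (1-x)^2) + Tσ * ((1-x)^M * (1-x)^2) ≤ den x := by
    rintro x ⟨hx0, hx1⟩
    have hs0 : (0:ℝ) ≤ 1 - x := by linarith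
    have hp : (1-x)^(M+2) = (1-x)^M * (1-x)^2 := by rw [pow_add]
    have hmid : (0:ℝ) ≤ ((M + 2 : ℕ) : ℝ) * x * (1 - x) ^ (M + 1) * (Ts - Tc) := by
      have : (0:ℝ) ≤ Ts - Tc := by linarith
      positivity
    simp only [hden]
    rw [hp]
    nlinarith [hmid]
  have hp1' : ∀ x ∈ Set.Icc (0:ℝ) 1, (1-x)^M * (1-x)^2 ≤ 1 := by
    rintro x ⟨hx0, hx1⟩
    have hp : (1-x)^(M+2) = (1-x)^M * (1-x)^2 := by rw [pow_add]
    have := pow_le_one₀ (show (0:ℝ) ≤ 1 - x by linarith) (show (1:ℝ) - x ≤ 1 by linarith) (n := M+2)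
    rwa [hp] at this
  have hp0' : ∀ x ∈ Set.Icc (0:ℝ) 1, (0:ℝ) ≤ (1-x)^M * (1-x)^2 := by
    rintro x ⟨hx0, hx1⟩
    have hs0 : (0:ℝ) ≤ 1 - x := by linarith
    positivity
  have hTσ_le : ∀ x ∈ Set.Icc (0:ℝ) 1, Tσ ≤ den x := by
    intro x hx
    have h1 := hdlb x hx
    have h2 := hp1' x hx
    have h3 := hp0' x hx
    nlinarith [mul_nonneg (sub_nonneg.2 hTσTc) (sub_nonneg.2 h2)]
  have hden_pos : ∀ x ∈ Set.Icc (0:ℝ) 1, 0 < den x := fun x hx =>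
    lt_of_lt_of_le hTσ (hTσ_le x hx)
  -- the derivative bound
  have bound : ∀ x ∈ Set.Icc (0:ℝ) 1,
      ‖(num' x * den x - num x * den' x) / (den x)^2‖ ≤ ((M + 2 : ℕ) : ℝ) * TP / Tσ := by
    intro x hx
    obtain ⟨hx0, hx1⟩ := hx
    have hs0 : (0:ℝ) ≤ 1 - x := by linarith
    have hs1 : (1:ℝ) - x ≤ 1 := by linarith
    have hr0 : (0:ℝ) ≤ (1-x)^M := pow_nonneg hs0 M
    have hr1 : (1-x)^M ≤ 1 := pow_le_one₀ hs0 hs1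
    have hq : (1-x)^(M+1) = (1-x)^M * (1-x) := pow_succ _ _
    have hp : (1-x)^(M+2) = (1-x)^M * (1-x)^2 := by rw [pow_add]
    have hP1 := hp1' x ⟨hx0, hx1⟩
    have hP0 := hp0' x ⟨hx0, hx1⟩
    have hD1 := hTσ_le x ⟨hx0, hx1⟩
    have hDlb := hdlb x ⟨hx0, hx1⟩
    have hD2 : Tc * (1 - (1-x)^M * (1-x)^2) ≤ den x := by
      nlinarith [mul_nonneg hTσ.le hP0]
    have hDpos := hden_pos x ⟨hx0, hx1⟩
    set A : ℝ := Tc * (1-x)^M * (1 - ((M:ℝ)+2)*x)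
        + (Tσ - Tc) * ((1-x)^M)^2 * (1-x)^2 with hA
    -- identity for the numerator of the derivative
    have hiden : num' x * den x - num x * den' x = TP * ((((M:ℝ))+2) * A) := by
      simp only [hnum, hnum', hden, hden', hA]
      rw [hq, hp]
      push_cast
      ring
    -- Bernoulli
    have hber : 1 - (((M:ℝ))+2)*x ≤ (1-x)^M * (1-x)^2 := by
      have h := one_add_mul_le_pow (show (-2:ℝ) ≤ -x by linarith) (M+2)
      rw [show ((1:ℝ) + -x) = 1 - x by ring, hp] at h
      push_cast at h
      linarith
    -- upper bound for A
    have h1 : Tc * (1-x)^M * (1 - ((M:ℝ)+2)*x)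
        ≤ Tc * (1-x)^M * ((1-x)^M * (1-x)^2) :=
      mul_le_mul_of_nonneg_left hber (mul_nonneg hTc0.le hr0)
    have hr2 : ((1-x)^M)^2 * (1-x)^2 ≤ 1 := by
      nlinarith [mul_nonneg (sub_nonneg.2 hr1) hP0, hP1]
    have hAup : A ≤ Tσ := by
      nlinarith [mul_le_mul_of_nonneg_left hr2 hTσ.le, h1]
    -- lower bound for A via the key inequality
    have hkey := bianchi_key_ineq M hs0 hs1
    rw [hp] at hkey
    have h2 := mul_le_mul_of_nonneg_left hkey hTc0.le
    have hlow : -A ≤ Tc * ((1 - (1-x)^M * (1-x)^2)^2) := by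
      have e : -A = Tc * ((1-x)^M * (((M:ℝ)+2) * (1-(1-x)) - 1 + (1-x)^M * (1-x)^2))
          - Tσ * (((1-x)^M)^2 * (1-x)^2) := by rw [hA]; ring
      have hnn : (0:ℝ) ≤ Tσ * (((1-x)^M)^2 * (1-x)^2) := by positivity
      linarith [h2]
    -- |A| * Tσ ≤ (den x)^2
    have habsA : |A| * Tσ ≤ (den x)^2 := by
      rcases abs_cases A with ⟨hAc, _⟩ | ⟨hAc, _⟩ <;> rw [hAc]
      · nlinarith [mul_le_mul_of_nonneg_right hAup hTσ.le,
          mul_self_le_mul_self hTσ.le hD1]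
      · have h1p0 : (0:ℝ) ≤ 1 - (1-x)^M * (1-x)^2 := by linarith
        nlinarith [mul_le_mul_of_nonneg_right hlow hTσ.le,
          mul_le_mul_of_nonneg_left hTσTc
            (mul_nonneg hTc0.le (sq_nonneg (1 - (1-x)^M * (1-x)^2))),
          mul_self_le_mul_self (mul_nonneg hTc0.le h1p0) hD2]
    have h4 : |A| ≤ (den x)^2 / Tσ := (le_div_iff₀ hTσ).2 habsA
    rw [Real.norm_eq_abs, abs_div, abs_of_nonneg (sq_nonneg (den x)),
      div_le_iff₀ (by positivity : (0:ℝ) < (den x)^2), hiden, abs_mul, abs_mul,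
      abs_of_pos hTP, abs_of_pos (show (0:ℝ) < (M:ℝ)+2 by positivity),
      show (((M+2:ℕ)):ℝ) * TP / Tσ * (den x)^2 = (TP * ((M:ℝ)+2)) * ((den x)^2 / Tσ) by
        push_cast; ring]
    calc TP * (((M:ℝ)+2) * |A|) = (TP * ((M:ℝ)+2)) * |A| := by ring
      _ ≤ (TP * ((M:ℝ)+2)) * ((den x)^2 / Tσ) :=
        mul_le_mul_of_nonneg_left h4 (by positivity)
  -- derivatives
  have hderiv : ∀ x ∈ Set.Icc (0:ℝ) 1, HasDerivWithinAt (fun t => num t / den t)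
      ((num' x * den x - num x * den' x) / (den x)^2) (Set.Icc (0:ℝ) 1) x := by
    intro x hx
    have h1 : HasDerivAt (fun t:ℝ => ((M+2:ℕ):ℝ) * t) ((M+2:ℕ):ℝ) x := by
      simpa using (hasDerivAt_id x).const_mul ((M+2:ℕ):ℝ)
    have hsub : HasDerivAt (fun t:ℝ => 1 - t) (-1) x := by
      simpa using (hasDerivAt_id x).const_sub 1
    have h2 : HasDerivAt (fun t:ℝ => (1-t)^(M+1)) (((M+1:ℕ):ℝ) * (1-x)^M * (-1)) x := by
      simpa [show M+1-1 = M from rfl] using hsub.fun_pow (M+1)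
    have h4 : HasDerivAt (fun t:ℝ => (1-t)^(M+2)) (((M+2:ℕ):ℝ) * (1-x)^(M+1) * (-1)) x := by
      simpa [show M+2-1 = M+1 from rfl] using hsub.fun_pow (M+2)
    have hnumd : HasDerivAt num (num' x) x := by
      have h := (h1.mul h2).mul_const TP
      simp only [hnum, hnum']
      exact h
    have hdend : HasDerivAt den (den' x) x := by
      have h := ((h4.mul_const Tσ).add ((h1.mul h2).mul_const (Ts-Tc))).add
        ((h4.const_sub 1).mul_const Tc)
      simp only [hden, hden']
      exact h
    exact (hnumd.div hdend (ne_of_gt (hden_pos x hx))).hasDerivWithinAt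
  intro τ₁ h₁ τ₂ h₂
  have mvt := (convex_Icc (0:ℝ) 1).norm_image_sub_le_of_norm_hasDerivWithin_le
    hderiv bound h₂ h₁
  have hU1 : U τ₁ = num τ₁ / den τ₁ := by rw [hU τ₁]
  have hU2 : U τ₂ = num τ₂ / den τ₂ := by rw [hU τ₂]
  rw [hU1, hU2]
  simpa [Real.norm_eq_abs] using mvt
end
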